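/- Let V_λ be an irreducible G-representation with Φ(V_λ) ≠ 0. Then the composition 1 → Φ(V_λ)⊗Φ(V_λ*) → Φ(V_λ⊗V_λ*), where the first map is the rigidity morphism ĩ dual to ẽ and the second is J, is equal to Φ(i_λ), where i_λ : ℂ → V_λ⊗V_λ* is the canonical coevaluation map. -/

import Mathlib

/-!
Context: `C` is a ℂ-linear abelian semisimple rigid balanced braided tensor category with
simple unit object and finite-dimensional Hom-spaces.  `A` is a rigid `C`-algebra
(a commutative associative unital algebra object with `dim Hom(1,A) = 1`, self-dual via its
multiplication pairing) with trivial twist, and `G` is a compact group acting on `A` by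
algebra automorphisms with `A^G = 1`.  The functor `Φ : Rep G ⥤ C` is `V ↦ (V ⊠ A)^G`,
characterized by the natural isomorphism `Hom_C(L, Φ(V)) ≅ (V ⊗ Hom_C(L, A))^G`.
-/

open CategoryTheory MonoidalCategory Limits

noncomputable section

universe u

variable (C : Type u) [Category.{u} C] [Preadditive C] [CategoryTheory.Linear ℂ C]
  [MonoidalCategory C] [BraidedCategory C] [RigidCategory C] [HasFiniteBiproducts C]
  [MonoidalPreadditive C] [MonoidalLinear ℂ C]
  (G : Type) [Group G] [TopologicalSpace G] [IsTopologicalGroup G] [CompactSpace G]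

/-- The standing data: a semisimple balanced braided ℂ-linear category `C` with simple unit
and finite-dimensional Hom-spaces, a rigid commutative algebra object `A` with trivial twist
and `dim Hom(1,A) = 1`, and a compact group `G` acting on `A` by algebra automorphisms with
`A^G = 1`. -/
structure OrbifoldAlgebra where
  /-- `C` is semisimple: every object is a finite biproduct of simple objects. -/
  semisimple : ∀ X : C, ∃ (n : ℕ) (f : Fin n → C), (∀ i, Simple (f i)) ∧ Nonempty (X ≅ ⨁ f)
  /-- All Hom-spaces are finite-dimensional. -/
  homFinite : ∀ X Y : C, FiniteDimensional ℂ (X ⟶ Y)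
  /-- The unit object is simple. -/
  unitSimple : Simple (𝟙_ C)
  /-- Endomorphisms of the unit object are scalars. -/
  endScalar : ∀ f : 𝟙_ C ⟶ 𝟙_ C, ∃! c : ℂ, f = c • 𝟙 (𝟙_ C)
  /-- The balancing (twist) of `C`. -/
  θ : ∀ X : C, X ⟶ X
  θ_isIso : ∀ X : C, IsIso (θ X)
  θ_natural : ∀ {X Y : C} (f : X ⟶ Y), θ X ≫ f = f ≫ θ Y
  θ_tensor : ∀ X Y : C, θ (X ⊗ Y) = (θ X ⊗ₘ θ Y) ≫ (β_ X Y).hom ≫ (β_ Y X).hom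
  θ_unit : θ (𝟙_ C) = 𝟙 (𝟙_ C)
  /-- The `C`-algebra `A`: a commutative associative unital algebra object in `C`. -/
  A : CommMon C
  /-- The multiplicity of the unit object `1` in `A` is `1`. -/
  unit_multiplicity_one : Module.finrank ℂ (𝟙_ C ⟶ A.X) = 1
  /-- `A` has trivial twist. -/
  θ_A : θ A.X = 𝟙 A.X
  /-- Rigidity of `A` as a `C`-algebra: `A` is self-dual via its multiplication pairing.
  `ε` is the "counit" and `coev` the corresponding coevaluation. -/
  ε : A.X ⟶ 𝟙_ C
  coev : 𝟙_ C ⟶ A.X ⊗ A.X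
  pairing_coev_ev :
    A.X ◁ coev ≫ (α_ A.X A.X A.X).inv ≫ (A.mon.mul ≫ ε) ▷ A.X = (ρ_ A.X).hom ≫ (λ_ A.X).inv
  pairing_ev_coev :
    coev ▷ A.X ≫ (α_ A.X A.X A.X).hom ≫ A.X ◁ (A.mon.mul ≫ ε) = (λ_ A.X).hom ≫ (ρ_ A.X).inv
  /-- The action of `G` on `A` by automorphisms. -/
  π : G →* Aut A.X
  /-- Each `π g` preserves the multiplication of `A`. -/
  π_mul : ∀ g : G, A.mon.mul ≫ (π g).hom = ((π g).hom ⊗ₘ (π g).hom) ≫ A.mon.mul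
  /-- Each `π g` preserves the unit of `A`. -/
  π_one : ∀ g : G, A.mon.one ≫ (π g).hom = A.mon.one
  one_mono : Mono A.mon.one
  /-- `A^G = 1`: every `G`-invariant morphism `L ⟶ A` factors through the unit `1 ↪ A`. -/
  invariants_unit : ∀ {L : C} (f : L ⟶ A.X),
    (∀ g : G, f ≫ (π g).hom = f) → ∃ f' : L ⟶ 𝟙_ C, f = f' ≫ A.mon.one

namespace OrbifoldAlgebra

variable {C G}
variable (ctx : OrbifoldAlgebra C G)

/-- The action of `g : G` on the Hom-space `L ⟶ A` (postcomposition with `π g`). -/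
def actHom (L : C) (g : G) : (L ⟶ ctx.A.X) →ₗ[ℂ] (L ⟶ ctx.A.X) where
  toFun f := f ≫ (ctx.π g).hom
  map_add' f₁ f₂ := by simp [Preadditive.add_comp]
  map_smul' c f := by simp [CategoryTheory.Linear.smul_comp]

/-- Precomposition with `u : L' ⟶ L`, as a linear map on Hom-spaces into `A`. -/
def precompHom {L' L : C} (u : L' ⟶ L) : (L ⟶ ctx.A.X) →ₗ[ℂ] (L' ⟶ ctx.A.X) where
  toFun f := u ≫ f
  map_add' f₁ f₂ := by simp [Preadditive.comp_add]
  map_smul' c f := by simp [CategoryTheory.Linear.comp_smul]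

/-- The diagonal action of `g : G` on `V ⊗ Hom(L, A)`. -/
def diagAct (L : C) (V : FDRep ℂ G) (g : G) :
    TensorProduct ℂ V (L ⟶ ctx.A.X) →ₗ[ℂ] TensorProduct ℂ V (L ⟶ ctx.A.X) :=
  TensorProduct.map (V.ρ g) (ctx.actHom L g)

/-- The `G`-invariants `(V ⊗ Hom_C(L, A))^G`. -/
def invSub (L : C) (V : FDRep ℂ G) : Submodule ℂ (TensorProduct ℂ V (L ⟶ ctx.A.X)) where
  carrier := {x | ∀ g : G, ctx.diagAct L V g x = x}
  add_mem' := fun ha hb g => by rw [map_add, ha g, hb g]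
  zero_mem' := fun g => map_zero _
  smul_mem' := fun c x hx g => by rw [map_smul, hx g]

/-- The pairing `(L ⟶ A) ⊗ (M ⟶ A) → (L ⊗ M ⟶ A)` induced by the multiplication of `A`. -/
def homMulBil (L M : C) : (L ⟶ ctx.A.X) →ₗ[ℂ] (M ⟶ ctx.A.X) →ₗ[ℂ] ((L ⊗ M : C) ⟶ ctx.A.X) :=
  LinearMap.mk₂ ℂ (fun f h => (f ⊗ₘ h) ≫ ctx.A.mon.mul)
    (fun f f' h => by simp [MonoidalPreadditive.add_tensor, Preadditive.add_comp])
    (fun c f h => by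
      simp [MonoidalCategory.tensorHom_def, MonoidalLinear.smul_whiskerRight, CategoryTheory.Linear.smul_comp])
    (fun f h h' => by simp [MonoidalPreadditive.tensor_add, Preadditive.add_comp])
    (fun c f h => by
      simp [MonoidalCategory.tensorHom_def, MonoidalLinear.whiskerLeft_smul, CategoryTheory.Linear.comp_smul,
        CategoryTheory.Linear.smul_comp])

/-- The canonical map `(V ⊗ Hom(L,A)) ⊗ (W ⊗ Hom(M,A)) → (V ⊗ W) ⊗ Hom(L ⊗ M, A)`
combining the multiplication of `A` with the regrouping of tensor factors; it is used to
characterize the structure morphism `J`. -/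
def mulPair (L M : C) (V W : FDRep ℂ G) :
    TensorProduct ℂ (TensorProduct ℂ V (L ⟶ ctx.A.X)) (TensorProduct ℂ W (M ⟶ ctx.A.X)) →ₗ[ℂ]
      TensorProduct ℂ ((V ⊗ W : FDRep ℂ G) : Type) ((L ⊗ M : C) ⟶ ctx.A.X) :=
  (TensorProduct.map LinearMap.id (TensorProduct.lift (ctx.homMulBil L M))).comp
    (TensorProduct.tensorTensorTensorComm ℂ (V : Type) (L ⟶ ctx.A.X) (W : Type)
      (M ⟶ ctx.A.X)).toLinearMap

/-- The quantum ("categorical") dimension of an object of `C`, defined via the rigidity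
morphisms and the twist. -/
def dimMor (X : C) : 𝟙_ C ⟶ 𝟙_ C :=
  η_ X Xᘁ ≫ (ctx.θ X ▷ Xᘁ) ≫ (β_ X Xᘁ).hom ≫ ε_ X Xᘁ

/-- The quantum dimension as a complex number. -/
def dimc (X : C) : ℂ := (ctx.endScalar (ctx.dimMor X)).exists.choose

end OrbifoldAlgebra

/-- The standing data together with the functor `Φ : Rep G ⥤ C`, `Φ(V) = (V ⊠ A)^G`,
characterized by the natural isomorphism `Hom_C(L, Φ(V)) ≅ (V ⊗ Hom_C(L, A))^G`. -/
structure OrbifoldContext extends OrbifoldAlgebra C G where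
  /-- The functor `Φ : Rep G ⥤ C`, `V ↦ (V ⊠ A)^G`. -/
  Φ : FDRep ℂ G ⥤ C
  /-- The defining property of `Φ`: `Hom_C(L, Φ(V)) ≅ (V ⊗ Hom_C(L, A))^G`. -/
  homIso : ∀ (L : C) (V : FDRep ℂ G),
    (L ⟶ Φ.obj V) ≃ₗ[ℂ] toOrbifoldAlgebra.invSub L V
  /-- Naturality of `homIso` in the variable `L`. -/
  homIso_natural : ∀ {L' L : C} (u : L' ⟶ L) (V : FDRep ℂ G) (f : L ⟶ Φ.obj V),
    ((homIso L' V (u ≫ f)) : TensorProduct ℂ V (L' ⟶ toOrbifoldAlgebra.A.X))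
      = TensorProduct.map LinearMap.id (toOrbifoldAlgebra.precompHom u)
          ((homIso L V f) : TensorProduct ℂ V (L ⟶ toOrbifoldAlgebra.A.X))
  /-- Naturality of `homIso` in the variable `V`: this characterizes `Φ` on morphisms. -/
  homIso_map : ∀ (L : C) {V W : FDRep ℂ G} (φ : V ⟶ W) (f : L ⟶ Φ.obj V),
    ((homIso L W (f ≫ Φ.map φ)) : TensorProduct ℂ W (L ⟶ toOrbifoldAlgebra.A.X))
      = TensorProduct.map φ.hom.hom.hom LinearMap.id
          ((homIso L V f) : TensorProduct ℂ V (L ⟶ toOrbifoldAlgebra.A.X))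
  /-- The identification `Φ(ℂ) ≅ 1` (cf. Theorem `Φ(1) = 1`). -/
  Φunit : Φ.obj (𝟙_ (FDRep ℂ G)) ≅ 𝟙_ C
  /-- Characterization of `Φunit`: under `homIso` its inverse corresponds to
  `1 ⊗ (unit of A)`. -/
  Φunit_char : ((homIso (𝟙_ C) (𝟙_ (FDRep ℂ G)) Φunit.inv) :
      TensorProduct ℂ ((𝟙_ (FDRep ℂ G) : FDRep ℂ G) : Type)
        ((𝟙_ C : C) ⟶ toOrbifoldAlgebra.A.X))
      = (1 : ℂ) ⊗ₜ[ℂ] toOrbifoldAlgebra.A.mon.one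
  /-- The structure morphism `J : Φ(V) ⊗ Φ(W) ⟶ Φ(V ⊗ W)`, defined as the composition
  `(V ⊠ A)^G ⊗ (W ⊠ A)^G ↪ ((V ⊗ W) ⊠ (A ⊗ A))^G → ((V ⊗ W) ⊠ A)^G` (the second map induced
  by the multiplication `μ` of `A`). -/
  J : ∀ V W : FDRep ℂ G, Φ.obj V ⊗ Φ.obj W ⟶ Φ.obj (V ⊗ W)
  /-- The defining property of `J`: under `homIso`, it is induced by the map
  `(V ⊗ Hom(L,A)) ⊗ (W ⊗ Hom(M,A)) → (V ⊗ W) ⊗ Hom(L ⊗ M, A)`,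
  `(v ⊗ f) ⊗ (w ⊗ h) ↦ (v ⊗ w) ⊗ ((f ⊗ h) ≫ μ)`. -/
  J_char : ∀ {L M : C} {V W : FDRep ℂ G} (f : L ⟶ Φ.obj V) (h : M ⟶ Φ.obj W),
    ((homIso (L ⊗ M) (V ⊗ W) ((f ⊗ₘ h) ≫ J V W)) :
        TensorProduct ℂ ((V ⊗ W : FDRep ℂ G) : Type)
          ((L ⊗ M : C) ⟶ toOrbifoldAlgebra.A.X))
      = toOrbifoldAlgebra.mulPair L M V W
          (((homIso L V f) : TensorProduct ℂ (V : Type) (L ⟶ toOrbifoldAlgebra.A.X)) ⊗ₜ[ℂ]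
            ((homIso M W h) : TensorProduct ℂ (W : Type) (M ⟶ toOrbifoldAlgebra.A.X)))
  /-- `J` is compatible with the unit isomorphisms (left). -/
  J_unit_left : ∀ V : FDRep ℂ G,
    (Φunit.inv ▷ Φ.obj V) ≫ J (𝟙_ (FDRep ℂ G)) V ≫ Φ.map (λ_ V).hom = (λ_ (Φ.obj V)).hom
  /-- `J` is compatible with the unit isomorphisms (right). -/
  J_unit_right : ∀ V : FDRep ℂ G,
    (Φ.obj V ◁ Φunit.inv) ≫ J V (𝟙_ (FDRep ℂ G)) ≫ Φ.map (ρ_ V).hom = (ρ_ (Φ.obj V)).hom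

namespace OrbifoldContext

variable {C G}
variable (ctx : OrbifoldContext C G)

/-- The morphism `ẽ : Φ(V*) ⊗ Φ(V) ⟶ 1`, the composition
`Φ(V*) ⊗ Φ(V) → Φ(V* ⊗ V) → Φ(ℂ) = 1` of `J` with `Φ` applied to the evaluation. -/
def etilde (V : FDRep ℂ G) : ctx.Φ.obj Vᘁ ⊗ ctx.Φ.obj V ⟶ 𝟙_ C :=
  ctx.J Vᘁ V ≫ ctx.Φ.map (ε_ V Vᘁ) ≫ ctx.Φunit.hom

end OrbifoldContext

/-!
Morphisms `1 ⟶ Φ(W)` correspond to `G`-invariant vectors of `W ⊗ Hom(1, A) = W ⊗ ℂι`, that is, to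
morphisms `ℂ ⟶ W` of representations. Hence `ĩ ≫ J = Φ(φ)` for some `φ : ℂ ⟶ V ⊗ V*`, and
`φ = c • i_λ` by Schur's lemma. Composing with `J` and `Φ(V ⊗ V* ⊗ V ⟶ V)`, the associativity,
naturality and unit constraints of `J` turn the zigzag identity of `(ĩ, ẽ)` into `id = c • id` on
`Φ(V) ≠ 0`, so `c = 1`.
-/

universe v

theorem CategoryTheory.Linear.eq_one_of_smul_id_eq_id {𝕜 D : Type*} [Field 𝕜] [Category D]
    [Preadditive D] [Linear 𝕜 D] {X : D} (hX : ¬IsZero X) {c : 𝕜} (h : c • 𝟙 X = 𝟙 X) :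
    c = 1 := by
  by_contra hc
  have h0 : (c - 1) • 𝟙 X = 0 := by rw [sub_smul, one_smul, h, sub_self]
  refine hX ((IsZero.iff_id_eq_zero X).mpr ?_)
  simpa [sub_ne_zero.mpr hc] using congrArg ((c - 1)⁻¹ • ·) h0

theorem CategoryTheory.MonObj.tensorHom_mul_assoc {D : Type*} [Category D] [MonoidalCategory D]
    {M : D} [MonObj M] {L L' L'' : D} (f : L ⟶ M) (h : L' ⟶ M) (k : L'' ⟶ M) :
    (((f ⊗ₘ h) ≫ mul) ⊗ₘ k) ≫ mul = (α_ L L' L'').hom ≫ (f ⊗ₘ ((h ⊗ₘ k) ≫ mul)) ≫ mul := by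
  rw [← Category.comp_id k, ← tensorHom_comp_tensorHom, Category.assoc, tensorHom_id,
    MonObj.mul_assoc, associator_naturality_assoc, ← id_tensorHom, tensorHom_comp_tensorHom_assoc,
    Category.comp_id, Category.comp_id]

namespace FDRep

variable {k H : Type v} [Field k] [Group H]

theorem exists_hom_unit_apply_one {W : FDRep k H} (y : W) (hy : ∀ g, W.ρ g y = y) :
    ∃ φ : 𝟙_ (FDRep k H) ⟶ W, φ.hom (1 : k) = y := by
  refine ⟨⟨FGModuleCat.ofHom (LinearMap.toSpanSingleton k W y), fun g => ?_⟩, one_smul k y⟩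
  refine FGModuleCat.hom_ext (LinearMap.ext fun (c : k) => ?_)
  show c • y = W.ρ g (c • y)
  rw [map_smul, hy]

theorem exists_eq_smul_coevaluation [IsAlgClosed k] (V : FDRep k H) [Simple V]
    (φ : 𝟙_ (FDRep k H) ⟶ V ⊗ Vᘁ) : ∃ c : k, φ = c • η_ V Vᘁ := by
  let e := tensorRightHomEquiv (𝟙_ (FDRep k H)) V Vᘁ V
  have e_symm_smul : ∀ (c : k) ψ, e.symm (c • ψ) = c • e.symm ψ := fun c ψ => by
    simp [e, tensorRightHomEquiv]
  have e_symm_coevaluation : e.symm (η_ V Vᘁ) = (λ_ V).hom := by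
    simp [e, tensorRightHomEquiv, ExactPairing.evaluation_coevaluation_assoc]
  obtain ⟨c, hc⟩ := endomorphism_simple_eq_smul_id k ((λ_ V).inv ≫ e.symm φ)
  refine ⟨c, e.symm.injective ?_⟩
  rw [e_symm_smul, e_symm_coevaluation, ← Category.comp_id (λ_ V).hom, ← Linear.comp_smul, hc,
    Iso.hom_inv_id_assoc]

end FDRep

section

variable {C : Type u} [Category.{u} C] [Preadditive C] [Linear ℂ C] [MonoidalCategory C]
  [BraidedCategory C] [HasFiniteBiproducts C] {G : Type} [Group G]

namespace OrbifoldAlgebra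

variable (OA : OrbifoldAlgebra C G)

theorem mon_one_ne_zero : OA.A.mon.one ≠ 0 := by
  intro h
  have : Mono (0 : 𝟙_ C ⟶ OA.A.X) := h ▸ OA.one_mono
  have := OA.unitSimple
  exact id_nonzero (𝟙_ C) ((cancel_mono (0 : 𝟙_ C ⟶ OA.A.X)).mp (by simp))

def unitHomEquiv : ℂ ≃ₗ[ℂ] (𝟙_ C ⟶ OA.A.X) :=
  have := OA.homFinite (𝟙_ C) OA.A.X
  LinearEquiv.ofBijective (LinearMap.toSpanSingleton ℂ _ OA.A.mon.one)
    ⟨smul_left_injective ℂ OA.mon_one_ne_zero,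
      (finrank_eq_one_iff_of_nonzero' _ OA.mon_one_ne_zero).mp OA.unit_multiplicity_one⟩

@[simp]
theorem unitHomEquiv_apply (c : ℂ) : OA.unitHomEquiv c = c • OA.A.mon.one :=
  rfl

def tmulOneEquiv (W : Type*) [AddCommGroup W] [Module ℂ W] :
    W ≃ₗ[ℂ] TensorProduct ℂ W (𝟙_ C ⟶ OA.A.X) :=
  (TensorProduct.rid ℂ W).symm ≪≫ₗ TensorProduct.congr (LinearEquiv.refl ℂ W) OA.unitHomEquiv

@[simp]
theorem tmulOneEquiv_apply {W : Type*} [AddCommGroup W] [Module ℂ W] (y : W) :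
    OA.tmulOneEquiv W y = y ⊗ₜ OA.A.mon.one := by
  simp [tmulOneEquiv]

theorem diagAct_tmul_one (W : FDRep ℂ G) (g : G) (y : W) :
    OA.diagAct (𝟙_ C) W g (y ⊗ₜ OA.A.mon.one) = W.ρ g y ⊗ₜ OA.A.mon.one := by
  rw [diagAct, TensorProduct.map_tmul]
  exact congrArg (W.ρ g y ⊗ₜ ·) (OA.π_one g)

theorem tmul_one_mem_invSub_iff (W : FDRep ℂ G) (y : W) :
    y ⊗ₜ OA.A.mon.one ∈ OA.invSub (𝟙_ C) W ↔ ∀ g, W.ρ g y = y := by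
  refine forall_congr' fun g => ?_
  rw [diagAct_tmul_one, ← tmulOneEquiv_apply, ← tmulOneEquiv_apply, EquivLike.apply_eq_iff_eq]

end OrbifoldAlgebra

variable [MonoidalPreadditive C] [MonoidalLinear ℂ C]

namespace OrbifoldAlgebra

variable (OA : OrbifoldAlgebra C G)

theorem mulPair_tmul {L M : C} {V W : FDRep ℂ G} (v : V) (f : L ⟶ OA.A.X) (w : W)
    (h : M ⟶ OA.A.X) :
    OA.mulPair L M V W ((v ⊗ₜ f) ⊗ₜ (w ⊗ₜ h)) = (v ⊗ₜ w) ⊗ₜ ((f ⊗ₘ h) ≫ OA.A.mon.mul) :=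
  rfl

theorem mulPair_map {L M : C} {V W V' W' : FDRep ℂ G} (φ : V ⟶ V') (ψ : W ⟶ W')
    (a : TensorProduct ℂ V (L ⟶ OA.A.X)) (b : TensorProduct ℂ W (M ⟶ OA.A.X)) :
    OA.mulPair L M V' W'
        (TensorProduct.map φ.hom.hom.hom LinearMap.id a ⊗ₜ TensorProduct.map ψ.hom.hom.hom
          LinearMap.id b)
      = TensorProduct.map (φ ⊗ₘ ψ).hom.hom.hom LinearMap.id (OA.mulPair L M V W (a ⊗ₜ b)) := by
  induction a using TensorProduct.induction_on with
  | zero => simp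
  | tmul v f =>
    induction b using TensorProduct.induction_on with
    | zero => simp
    | tmul w h => rfl
    | add b₁ b₂ ih₁ ih₂ => simp only [map_add, TensorProduct.tmul_add, ih₁, ih₂]
  | add a₁ a₂ ih₁ ih₂ => simp only [map_add, TensorProduct.add_tmul, ih₁, ih₂]

theorem mulPair_assoc {L M N : C} {V W U : FDRep ℂ G}
    (a : TensorProduct ℂ V (L ⟶ OA.A.X)) (b : TensorProduct ℂ W (M ⟶ OA.A.X))
    (c : TensorProduct ℂ U (N ⟶ OA.A.X)) :
    OA.mulPair (L ⊗ M) N (V ⊗ W) U (OA.mulPair L M V W (a ⊗ₜ b) ⊗ₜ c)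
      = TensorProduct.map LinearMap.id (OA.precompHom (α_ L M N).hom)
          (TensorProduct.map (α_ V W U).inv.hom.hom.hom LinearMap.id
            (OA.mulPair L (M ⊗ N) V (W ⊗ U) (a ⊗ₜ OA.mulPair M N W U (b ⊗ₜ c)))) := by
  induction a using TensorProduct.induction_on with
  | zero => simp
  | add a₁ a₂ ih₁ ih₂ => simp only [map_add, TensorProduct.add_tmul, ih₁, ih₂]
  | tmul v f =>
    induction b using TensorProduct.induction_on with
    | zero => simp
    | add b₁ b₂ ih₁ ih₂ =>
      simp only [map_add, TensorProduct.tmul_add, TensorProduct.add_tmul, ih₁, ih₂]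
    | tmul w h =>
      induction c using TensorProduct.induction_on with
      | zero => simp
      | add c₁ c₂ ih₁ ih₂ => simp only [map_add, TensorProduct.tmul_add, ih₁, ih₂]
      | tmul u k =>
        rw [mulPair_tmul, mulPair_tmul, mulPair_tmul, mulPair_tmul, TensorProduct.map_tmul,
          TensorProduct.map_tmul, MonObj.tensorHom_mul_assoc]
        rfl

end OrbifoldAlgebra

namespace OrbifoldContext

variable (ctx : OrbifoldContext C G)

theorem hom_ext {L : C} {V : FDRep ℂ G} {f f' : L ⟶ ctx.Φ.obj V}
    (h : (ctx.homIso L V f : TensorProduct ℂ V (L ⟶ ctx.A.X)) = ctx.homIso L V f') : f = f' :=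
  (ctx.homIso L V).injective (Subtype.ext h)

theorem homIso_Φ_map {V W : FDRep ℂ G} (φ : V ⟶ W) :
    (ctx.homIso (ctx.Φ.obj V) W (ctx.Φ.map φ) : TensorProduct ℂ W (ctx.Φ.obj V ⟶ ctx.A.X))
      = TensorProduct.map φ.hom.hom.hom LinearMap.id (ctx.homIso _ V (𝟙 (ctx.Φ.obj V))) := by
  simpa using ctx.homIso_map (ctx.Φ.obj V) φ (𝟙 _)

theorem homIso_J (V W : FDRep ℂ G) :
    (ctx.homIso _ (V ⊗ W) (ctx.J V W) :
        TensorProduct ℂ ((V ⊗ W : FDRep ℂ G) : Type) (ctx.Φ.obj V ⊗ ctx.Φ.obj W ⟶ ctx.A.X))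
      = ctx.mulPair _ _ V W
          ((ctx.homIso _ V (𝟙 (ctx.Φ.obj V)) : TensorProduct ℂ V (ctx.Φ.obj V ⟶ ctx.A.X)) ⊗ₜ
            (ctx.homIso _ W (𝟙 (ctx.Φ.obj W)) : TensorProduct ℂ W (ctx.Φ.obj W ⟶ ctx.A.X))) := by
  simpa using ctx.J_char (𝟙 (ctx.Φ.obj V)) (𝟙 (ctx.Φ.obj W))

theorem map_smul {V W : FDRep ℂ G} (c : ℂ) (φ : V ⟶ W) :
    ctx.Φ.map (c • φ) = c • ctx.Φ.map φ := by
  refine ctx.hom_ext ?_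
  rw [homIso_Φ_map, LinearEquiv.map_smul, Submodule.coe_smul, homIso_Φ_map]
  change TensorProduct.map (c • φ.hom.hom.hom) LinearMap.id _ = _
  rw [TensorProduct.map_smul_left, LinearMap.smul_apply]

theorem J_natural {V V' W W' : FDRep ℂ G} (φ : V ⟶ V') (ψ : W ⟶ W') :
    (ctx.Φ.map φ ⊗ₘ ctx.Φ.map ψ) ≫ ctx.J V' W' = ctx.J V W ≫ ctx.Φ.map (φ ⊗ₘ ψ) := by
  refine ctx.hom_ext ?_
  rw [ctx.J_char, ctx.homIso_map, homIso_Φ_map, homIso_Φ_map, homIso_J]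
  exact ctx.mulPair_map φ ψ _ _

theorem J_assoc (V W U : FDRep ℂ G) :
    (ctx.J V W ▷ ctx.Φ.obj U) ≫ ctx.J (V ⊗ W) U
      = (α_ (ctx.Φ.obj V) (ctx.Φ.obj W) (ctx.Φ.obj U)).hom ≫ (ctx.Φ.obj V ◁ ctx.J W U) ≫
          ctx.J V (W ⊗ U) ≫ ctx.Φ.map (α_ V W U).inv := by
  refine ctx.hom_ext ?_
  rw [← tensorHom_id, ← id_tensorHom, ← Category.assoc (_ ⊗ₘ _), ctx.J_char, ctx.homIso_natural,
    ctx.homIso_map, ctx.J_char, homIso_J, homIso_J]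
  exact ctx.mulPair_assoc _ _ _

theorem unitInv_whiskerRight_comp_J (V : FDRep ℂ G) :
    ctx.Φunit.inv ▷ ctx.Φ.obj V ≫ ctx.J (𝟙_ _) V = (λ_ (ctx.Φ.obj V)).hom ≫ ctx.Φ.map (λ_ V).inv :=
  (Iso.eq_comp_inv (ctx.Φ.mapIso (λ_ V))).mpr (by simpa using ctx.J_unit_left V)

theorem exists_homIso_eq_tmul_one {W : FDRep ℂ G} (f : 𝟙_ C ⟶ ctx.Φ.obj W) :
    ∃ y : W, (∀ g, W.ρ g y = y) ∧
      (ctx.homIso (𝟙_ C) W f : TensorProduct ℂ W (𝟙_ C ⟶ ctx.A.X)) = y ⊗ₜ ctx.A.mon.one := by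
  set y := (ctx.tmulOneEquiv W).symm (ctx.homIso (𝟙_ C) W f)
  have hf : (ctx.homIso (𝟙_ C) W f : TensorProduct ℂ W (𝟙_ C ⟶ ctx.A.X)) = y ⊗ₜ ctx.A.mon.one := by
    rw [← OrbifoldAlgebra.tmulOneEquiv_apply, LinearEquiv.apply_symm_apply]
  exact ⟨y, (ctx.tmul_one_mem_invSub_iff W y).mp (hf ▸ (ctx.homIso (𝟙_ C) W f).2), hf⟩

theorem homIso_unitInv_comp_map {W : FDRep ℂ G} (φ : 𝟙_ (FDRep ℂ G) ⟶ W) :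
    (ctx.homIso (𝟙_ C) W (ctx.Φunit.inv ≫ ctx.Φ.map φ) : TensorProduct ℂ W (𝟙_ C ⟶ ctx.A.X))
      = φ.hom (1 : ℂ) ⊗ₜ ctx.A.mon.one := by
  rw [ctx.homIso_map, ctx.Φunit_char, TensorProduct.map_tmul]
  rfl

theorem exists_eq_unitInv_comp_map {W : FDRep ℂ G} (f : 𝟙_ C ⟶ ctx.Φ.obj W) :
    ∃ φ : 𝟙_ (FDRep ℂ G) ⟶ W, f = ctx.Φunit.inv ≫ ctx.Φ.map φ := by
  obtain ⟨y, hy, hf⟩ := ctx.exists_homIso_eq_tmul_one f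
  obtain ⟨φ, hφ⟩ := FDRep.exists_hom_unit_apply_one y hy
  exact ⟨φ, ctx.hom_ext (by rw [hf, homIso_unitInv_comp_map, hφ])⟩

theorem unitInv_comp_map_whiskerRight_comp_J {W : FDRep ℂ G} (φ : 𝟙_ (FDRep ℂ G) ⟶ W)
    (V : FDRep ℂ G) :
    (ctx.Φunit.inv ≫ ctx.Φ.map φ) ▷ ctx.Φ.obj V ≫ ctx.J W V
      = (λ_ (ctx.Φ.obj V)).hom ≫ ctx.Φ.map ((λ_ V).inv ≫ φ ▷ V) := by
  have J_whiskerRight :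
      ctx.Φ.map φ ▷ ctx.Φ.obj V ≫ ctx.J W V = ctx.J (𝟙_ _) V ≫ ctx.Φ.map (φ ▷ V) := by
    simpa using ctx.J_natural φ (𝟙 V)
  rw [comp_whiskerRight, Category.assoc, J_whiskerRight, ← Category.assoc,
    unitInv_whiskerRight_comp_J, Category.assoc, ← ctx.Φ.map_comp]

theorem J_comp_map_evaluation (V : FDRep ℂ G) :
    ctx.J Vᘁ V ≫ ctx.Φ.map (ε_ V Vᘁ) = ctx.etilde V ≫ ctx.Φunit.inv := by
  simp [etilde]

theorem J_whiskerRight_comp_J_comp_map_evaluation (V : FDRep ℂ G) :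
    ctx.J V Vᘁ ▷ ctx.Φ.obj V ≫ ctx.J (V ⊗ Vᘁ) V ≫
        ctx.Φ.map ((α_ V Vᘁ V).hom ≫ V ◁ ε_ V Vᘁ ≫ (ρ_ V).hom)
      = (α_ _ _ _).hom ≫ ctx.Φ.obj V ◁ ctx.etilde V ≫ (ρ_ (ctx.Φ.obj V)).hom := by
  have J_whiskerLeft : ctx.J V (Vᘁ ⊗ V) ≫ ctx.Φ.map (V ◁ ε_ V Vᘁ)
      = ctx.Φ.obj V ◁ ctx.Φ.map (ε_ V Vᘁ) ≫ ctx.J V (𝟙_ _) := by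
    simpa using (ctx.J_natural (𝟙 V) (ε_ V Vᘁ)).symm
  rw [← Category.assoc, J_assoc]
  simp only [Category.assoc]
  rw [← ctx.Φ.map_comp, Iso.inv_hom_id_assoc, ctx.Φ.map_comp, ← Category.assoc (ctx.J V _),
    J_whiskerLeft, Category.assoc, ← Category.assoc (ctx.Φ.obj V ◁ _), ← whiskerLeft_comp,
    J_comp_map_evaluation, whiskerLeft_comp, Category.assoc, ctx.J_unit_right]

end OrbifoldContext

end

theorem itilde_J_eq_phi_coevaluation (ctx : OrbifoldContext C G) (V : FDRep ℂ G)
    (hV : Simple V) (hnz : ¬IsZero (ctx.Φ.obj V))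
    (itld : 𝟙_ C ⟶ ctx.Φ.obj V ⊗ ctx.Φ.obj Vᘁ)
    (zig₂ : itld ▷ ctx.Φ.obj V ≫ (α_ (ctx.Φ.obj V) (ctx.Φ.obj Vᘁ) (ctx.Φ.obj V)).hom ≫
        ctx.Φ.obj V ◁ ctx.etilde V
      = (λ_ (ctx.Φ.obj V)).hom ≫ (ρ_ (ctx.Φ.obj V)).inv) :
    itld ≫ ctx.J V Vᘁ = ctx.Φunit.inv ≫ ctx.Φ.map (η_ V Vᘁ) := by
  obtain ⟨φ, hφ⟩ := ctx.exists_eq_unitInv_comp_map (itld ≫ ctx.J V Vᘁ)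
  obtain ⟨c, rfl⟩ := FDRep.exists_eq_smul_coevaluation V φ
  suffices c = 1 by rw [hφ, this, one_smul]
  refine Linear.eq_one_of_smul_id_eq_id hnz ((cancel_epi (λ_ (ctx.Φ.obj V)).hom).mp ?_)
  set ev := (α_ V Vᘁ V).hom ≫ V ◁ ε_ V Vᘁ ≫ (ρ_ V).hom
  have zigzag : (λ_ V).inv ≫ (c • η_ V Vᘁ) ▷ V ≫ ev = c • 𝟙 V := by
    simp [ev, MonoidalLinear.smul_whiskerRight]
  calc (λ_ (ctx.Φ.obj V)).hom ≫ (c • 𝟙 (ctx.Φ.obj V))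
      = ((λ_ _).hom ≫ ctx.Φ.map ((λ_ V).inv ≫ (c • η_ V Vᘁ) ▷ V)) ≫ ctx.Φ.map ev := by
        rw [Category.assoc, ← ctx.Φ.map_comp, Category.assoc, zigzag, ctx.map_smul, ctx.Φ.map_id]
    _ = (itld ≫ ctx.J V Vᘁ) ▷ _ ≫ ctx.J (V ⊗ Vᘁ) V ≫ ctx.Φ.map ev := by
        rw [hφ, ← ctx.unitInv_comp_map_whiskerRight_comp_J, Category.assoc]
    _ = (λ_ _).hom ≫ 𝟙 _ := by
        rw [comp_whiskerRight, Category.assoc, ctx.J_whiskerRight_comp_J_comp_map_evaluation,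
          ← Category.assoc (α_ _ _ _).hom, ← Category.assoc, zig₂]
        simp
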